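/- Let the monotone nonnegative cone be K = {β ∈ ℝ^p : 0 ≤ β₁ ≤ ... ≤ β_p} and B' = conv{r·b₁, ..., r·b_p} be the convex hull of the scaled extreme unit vectors b_i (last i coordinates 1/√i, rest zero). Then for every nonnegative vector λ ∈ K (viewed as a weight vector), min_{β ∈ K, ‖β‖=r} ⟨λ, β⟩ = min_{β ∈ B'} ⟨λ, β⟩ = min_{i=1,...,p} r⟨λ, b_i⟩. -/

import Mathlib

/-!
A vector `β` of the monotone nonnegative cone is a nonnegative combination `∑ₙ dₙ 1_{[n,p)}` of
indicators of upper intervals, and `1_{[n,p)}` is a positive multiple of `b_{p-1-n}`. If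
`c ≤ ⟨λ, bᵢ⟩` for all `i`, then `c ‖x‖ ≤ ⟨λ, x⟩` holds for each generator `x`, hence, by the
triangle inequality, for every nonnegative combination of them. With `c = minᵢ ⟨λ, bᵢ⟩ ≥ 0` this
bounds `⟨λ, β⟩` below by `r c` on the sphere `‖β‖ = r`, and `r bᵢ` attains the bound. On the
simplex `B'` the linear functional `⟨λ, ·⟩` is concave, so it attains its minimum at a vertex.
-/

open Finset

noncomputable def bvec (p : ℕ) (i : Fin p) : Fin p → ℝ :=
  fun j => if p ≤ (j : ℕ) + (i : ℕ) + 1 then 1 / Real.sqrt ((i : ℕ) + 1) else 0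

theorem mul_norm_sum_smul_le {ι E : Type*} [SeminormedAddCommGroup E] [NormedSpace ℝ E]
    (φ : E →ₗ[ℝ] ℝ) {c : ℝ} (hc : 0 ≤ c) (s : Finset ι) {D : ι → ℝ} {u : ι → E}
    (hD : ∀ i ∈ s, 0 ≤ D i) (hu : ∀ i ∈ s, c * ‖u i‖ ≤ φ (u i)) :
    c * ‖∑ i ∈ s, D i • u i‖ ≤ φ (∑ i ∈ s, D i • u i) :=
  calc c * ‖∑ i ∈ s, D i • u i‖ ≤ c * ∑ i ∈ s, ‖D i • u i‖ := by gcongr; exact norm_sum_le _ _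
    _ = ∑ i ∈ s, D i * (c * ‖u i‖) := by
      rw [mul_sum]
      refine sum_congr rfl fun i hi => ?_
      rw [norm_smul, Real.norm_of_nonneg (hD i hi)]
      ring
    _ ≤ ∑ i ∈ s, D i * φ (u i) :=
      sum_le_sum fun i hi => mul_le_mul_of_nonneg_left (hu i hi) (hD i hi)
    _ = φ (∑ i ∈ s, D i • u i) := by simp

theorem Monotone.exists_nonneg_sum_smul_indicator_Ici {p : ℕ} {β : Fin p → ℝ} (hβ : Monotone β)
    (hβ0 : ∀ i, 0 ≤ β i) :
    ∃ d : Fin p → ℝ, (∀ n, 0 ≤ d n) ∧ β = ∑ n, d n • (Set.Ici n).indicator 1 := by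
  -- Prepending `0` turns the increments of `β`, starting with `β 0` itself, into a telescoping sum.
  set g : Fin (p + 1) → ℝ := Fin.cons 0 β
  refine ⟨fun n => g n.succ - g n.castSucc, fun n => ?_, ?_⟩
  · rw [sub_nonneg, show g n.succ = β n from Fin.cons_succ ..]
    rcases n with ⟨_ | k, hk⟩
    · exact hβ0 _
    · exact hβ (Nat.le_succ k)
  · ext j
    rw [Finset.sum_apply]
    simp only [Pi.smul_apply, Set.indicator_apply, Set.mem_Ici, Pi.one_apply, smul_eq_mul,
      mul_ite, mul_one, mul_zero]
    rw [← sum_filter, filter_ge_eq_Iic, Fin.sum_Iic_sub]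
    simp [g]

theorem LinearMap.isLeast_image_convexHull_range {ι E : Type*} [Fintype ι] [AddCommGroup E]
    [Module ℝ E] (φ : E →ₗ[ℝ] ℝ) (v : ι → E) (hne : (univ : Finset ι).Nonempty) :
    IsLeast (φ '' convexHull ℝ (Set.range v)) (univ.inf' hne (φ ∘ v)) := by
  obtain ⟨i₀, -, hi₀⟩ := exists_mem_eq_inf' hne (φ ∘ v)
  refine ⟨⟨v i₀, subset_convexHull ℝ _ (Set.mem_range_self i₀), hi₀.symm⟩, ?_⟩
  rintro _ ⟨x, hx, rfl⟩
  obtain ⟨_, ⟨i, rfl⟩, hi⟩ :=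
    (φ.concaveOn (convex_convexHull ℝ _)).exists_le_of_mem_convexHull (subset_convexHull ℝ _) hx
  exact (inf'_le _ (mem_univ i)).trans hi

theorem EuclideanSpace.norm_toLp_eq_sqrt_sum_sq {ι : Type*} [Fintype ι] (x : ι → ℝ) :
    ‖WithLp.toLp 2 x‖ = √(∑ i, x i ^ 2) := by
  simp [EuclideanSpace.norm_eq]

section
variable {p : ℕ}

lemma bvec_nonneg (i j : Fin p) : 0 ≤ bvec p i j := by
  unfold bvec; positivity

lemma monotone_bvec (i : Fin p) : Monotone (bvec p i) := by
  intro j k (hjk : (j : ℕ) ≤ k)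
  unfold bvec
  split_ifs <;> first | rfl | positivity | omega

lemma bvec_rev_eq_smul_indicator_Ici (n : Fin p) :
    bvec p n.rev = (√((n.rev : ℕ) + 1 : ℝ))⁻¹ • (Set.Ici n).indicator 1 := by
  ext j
  have : p ≤ j + n.rev + 1 ↔ n ≤ j := by rw [Fin.val_rev, Fin.le_iff_val_le_val]; omega
  simp only [bvec, this, one_div, Pi.smul_apply, Set.indicator_apply, Set.mem_Ici, Pi.one_apply,
    smul_eq_mul, mul_ite, mul_one, mul_zero]

lemma norm_toLp_bvec (i : Fin p) : ‖WithLp.toLp 2 (bvec p i)‖ = 1 := by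
  rw [← Fin.rev_rev i, bvec_rev_eq_smul_indicator_Ici, EuclideanSpace.norm_toLp_eq_sqrt_sum_sq,
    Real.sqrt_eq_one]
  have hi : (0 : ℝ) < (i : ℕ) + 1 := by positivity
  simp [Set.indicator_apply, sum_ite, filter_le_eq_Ici, Fin.card_Ici, Real.sq_sqrt hi.le, hi.ne']

lemma mul_sqrt_sum_sq_le_dotProduct {lam β : Fin p → ℝ} {c : ℝ} (hc0 : 0 ≤ c)
    (hc : ∀ i, c ≤ lam ⬝ᵥ bvec p i) (hβ : Monotone β) (hβ0 : ∀ i, 0 ≤ β i) :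
    c * √(∑ i, β i ^ 2) ≤ lam ⬝ᵥ β := by
  obtain ⟨d, hd, rfl⟩ := hβ.exists_nonneg_sum_smul_indicator_Ici hβ0
  set t : Fin p → ℝ := fun n => √((n.rev : ℕ) + 1 : ℝ)
  have ht : ∀ n, 0 < t n := fun n => by positivity
  have hsum : ∑ n, d n • (Set.Ici n).indicator 1 = ∑ n, (d n * t n) • bvec p n.rev :=
    sum_congr rfl fun n _ => by
      rw [bvec_rev_eq_smul_indicator_Ici, smul_smul, mul_assoc, mul_inv_cancel₀ (ht n).ne', mul_one]
  have key := mul_norm_sum_smul_le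
    (dotProductBilin ℝ ℝ lam ∘ₗ (WithLp.linearEquiv 2 ℝ (Fin p → ℝ)).toLinearMap) hc0 univ
    (D := fun n => d n * t n) (u := fun n => WithLp.toLp 2 (bvec p n.rev))
    (fun n _ => mul_nonneg (hd n) (ht n).le)
    (fun n _ => by simpa [norm_toLp_bvec] using hc n.rev)
  simp only [← WithLp.toLp_smul, ← WithLp.toLp_sum, EuclideanSpace.norm_toLp_eq_sqrt_sum_sq] at key
  rw [hsum]
  exact key

lemma isLeast_dotProduct_monotone_sphere (hne : (univ : Finset (Fin p)).Nonempty)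
    {lam : Fin p → ℝ} (hlam : ∀ i, 0 ≤ lam i) {r : ℝ} (hr : 0 < r) :
    IsLeast {v : ℝ | ∃ β : Fin p → ℝ, Monotone β ∧ (∀ i, 0 ≤ β i) ∧
        √(∑ i, β i ^ 2) = r ∧ v = lam ⬝ᵥ β}
      (univ.inf' hne fun i => r * lam ⬝ᵥ bvec p i) := by
  obtain ⟨i₀, -, hi₀⟩ := exists_mem_eq_inf' hne fun i => r * lam ⬝ᵥ bvec p i
  set m := univ.inf' hne fun i => r * lam ⬝ᵥ bvec p i
  refine ⟨⟨r • bvec p i₀, (monotone_bvec i₀).const_smul hr.le,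
    fun j => mul_nonneg hr.le (bvec_nonneg i₀ j), ?_,
    by rw [hi₀, dotProduct_smul, smul_eq_mul]⟩, ?_⟩
  · rw [← EuclideanSpace.norm_toLp_eq_sqrt_sum_sq, WithLp.toLp_smul, norm_smul, norm_toLp_bvec,
      Real.norm_of_nonneg hr.le, mul_one]
  rintro _ ⟨β, hβ, hβ0, hβr, rfl⟩
  have hm0 : 0 ≤ m := hi₀ ▸
    mul_nonneg hr.le (dotProduct_nonneg_of_nonneg hlam (bvec_nonneg i₀))
  have hc : ∀ i, m / r ≤ lam ⬝ᵥ bvec p i := fun i => (div_le_iff₀' hr).2 (inf'_le _ (mem_univ i))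
  calc m = m / r * √(∑ i, β i ^ 2) := by rw [hβr, div_mul_cancel₀ m hr.ne']
    _ ≤ lam ⬝ᵥ β := mul_sqrt_sum_sq_le_dotProduct (div_nonneg hm0 hr.le) hc hβ hβ0

end

theorem stmt19_general {p : ℕ} (hp : 0 < p) (lam : Fin p → ℝ)
    (hnonneg : ∀ i, 0 ≤ lam i) (r : ℝ) (hr : 0 < r) :
    IsLeast {v : ℝ | ∃ β : Fin p → ℝ, Monotone β ∧ (∀ i, 0 ≤ β i) ∧
        Real.sqrt (∑ i, (β i) ^ 2) = r ∧ v = ∑ i, lam i * β i}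
      (Finset.univ.inf' (Finset.univ_nonempty_iff.mpr (Fin.pos_iff_nonempty.mp hp))
        fun i => r * ∑ j, lam j * bvec p i j) ∧
    IsLeast {v : ℝ | ∃ β ∈ convexHull ℝ (Set.range fun i : Fin p => r • bvec p i),
        v = ∑ i, lam i * β i}
      (Finset.univ.inf' (Finset.univ_nonempty_iff.mpr (Fin.pos_iff_nonempty.mp hp))
        fun i => r * ∑ j, lam j * bvec p i j) := by
  set hne := univ_nonempty_iff.mpr (Fin.pos_iff_nonempty.mp hp)
  refine ⟨isLeast_dotProduct_monotone_sphere hne hnonneg hr, ?_⟩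
  convert (dotProductBilin ℝ ℝ lam).isLeast_image_convexHull_range (fun i => r • bvec p i) hne
    using 1
  · ext v
    simp [eq_comm, dotProduct]
  · simp [dotProduct]

theorem stmt19 {p : ℕ} (hp : 0 < p) (lam : Fin p → ℝ) (hmono : Monotone lam)
    (hnonneg : ∀ i, 0 ≤ lam i) (r : ℝ) (hr : 0 < r) :
    IsLeast {v : ℝ | ∃ β : Fin p → ℝ, Monotone β ∧ (∀ i, 0 ≤ β i) ∧
        Real.sqrt (∑ i, (β i) ^ 2) = r ∧ v = ∑ i, lam i * β i}
      (Finset.univ.inf' (Finset.univ_nonempty_iff.mpr (Fin.pos_iff_nonempty.mp hp))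
        fun i => r * ∑ j, lam j * bvec p i j) ∧
    IsLeast {v : ℝ | ∃ β ∈ convexHull ℝ (Set.range fun i : Fin p => r • bvec p i),
        v = ∑ i, lam i * β i}
      (Finset.univ.inf' (Finset.univ_nonempty_iff.mpr (Fin.pos_iff_nonempty.mp hp))
        fun i => r * ∑ j, lam j * bvec p i j) :=
  stmt19_general hp lam hnonneg r hr
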